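/- Let d ≥ 1 and let F = {F_i}_{i=1}^{d²} be a Wigner basis for d×d complex matrices with weights f_i = tr F_i. Define the shifted family F^S by F^S_i := −F_i + (2f_i/d)·I. Then F^S is again a Wigner basis and tr F^S_i = f_i for all i. -/

import Mathlib

open Matrix BigOperators
open scoped ComplexOrder Kronecker

/-- A measure basis: a linearly independent family of `d²` Hermitian `d×d` complex
matrices summing to the identity, with nonnegative traces. -/
def IsMeasureBasis {d : ℕ} (L : Fin (d ^ 2) → Matrix (Fin d) (Fin d) ℂ) : Prop :=
  (∀ i, (L i).IsHermitian) ∧ LinearIndependent ℝ L ∧ (∑ i, L i) = 1 ∧ ∀ i, 0 ≤ ((L i).trace).re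

/-- A Wigner basis: an orthogonal measure basis. -/
def IsWignerBasis {d : ℕ} (L : Fin (d ^ 2) → Matrix (Fin d) (Fin d) ℂ) : Prop :=
  IsMeasureBasis L ∧ ∀ i j, i ≠ j → (L i * L j).trace = 0

/-- The rescaled frame operator `S_L(X) = ∑ⱼ (tr(X Lⱼ)/lⱼ) Lⱼ`. -/
noncomputable def rsFrameOp {n : Type*} [Fintype n] {m : Type*} [Fintype m] [DecidableEq m]
    (L : n → Matrix m m ℂ) (X : Matrix m m ℂ) : Matrix m m ℂ :=
  ∑ j, (((X * L j).trace) / ((L j).trace)) • L j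

/-- A map on matrices that is ℝ-linear, Hermiticity-preserving, self-adjoint with respect to
the Hilbert–Schmidt inner product on Hermitian matrices, and positive. -/
def IsPosSelfAdjMap {m : Type*} [Fintype m]
    (T : Matrix m m ℂ → Matrix m m ℂ) : Prop :=
  IsLinearMap ℝ T ∧ (∀ X, X.IsHermitian → (T X).IsHermitian) ∧
  (∀ X Y, X.IsHermitian → Y.IsHermitian → (T X * Y).trace = (X * T Y).trace) ∧
  (∀ X, X.IsHermitian → 0 ≤ ((X * T X).trace).re)

/-- `T` is the (unique) positive self-adjoint inverse square root of the rescaled frame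
operator of `L`, i.e. `S_L ∘ T ∘ T = id` on Hermitian matrices; `PW(L) i = T (L i)`. -/
def IsInvSqrtOfFrameOp {n : Type*} [Fintype n] {m : Type*} [Fintype m] [DecidableEq m]
    (L : n → Matrix m m ℂ) (T : Matrix m m ℂ → Matrix m m ℂ) : Prop :=
  IsPosSelfAdjMap T ∧ ∀ X : Matrix m m ℂ, X.IsHermitian → rsFrameOp L (T (T X)) = X

/-!
`X ↦ -X + (2 tr X / d) • 1` is the reflection of `d × d` matrices that fixes the line through `1`
and negates its orthogonal complement for the bilinear form `tr (X Y)`. A linear involution that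
preserves this form, the trace and `1` carries linear independence, `∑ Fᵢ = 1`, the weights and
the orthogonality relations of `F` over to its image; on Hermitian `Fᵢ` the trace is real, so the
image is `Fᔆ`.
-/

namespace Matrix

def shiftMap (n K : Type*) [Fintype n] [DecidableEq n] [Field K] :
    Matrix n n K →ₗ[K] Matrix n n K :=
  -LinearMap.id + (2 / Fintype.card n : K) • (traceLinearMap n K K).smulRight 1

section Field

variable {n K : Type*} [Fintype n] [DecidableEq n] [Field K]

theorem shiftMap_apply (X : Matrix n n K) :
    shiftMap n K X = -X + (2 * X.trace / Fintype.card n) • 1 := by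
  simp only [shiftMap, LinearMap.add_apply, LinearMap.neg_apply, LinearMap.id_apply,
    LinearMap.smul_apply, LinearMap.smulRight_apply, traceLinearMap_apply, smul_smul]
  ring_nf

variable (hn : (Fintype.card n : K) ≠ 0)
include hn

theorem trace_shiftMap (X : Matrix n n K) : (shiftMap n K X).trace = X.trace := by
  rw [shiftMap_apply, trace_add, trace_neg, trace_smul, trace_one, smul_eq_mul]
  field_simp
  ring

theorem shiftMap_shiftMap (X : Matrix n n K) : shiftMap n K (shiftMap n K X) = X := by
  rw [shiftMap_apply (shiftMap n K X), trace_shiftMap hn, shiftMap_apply]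
  abel

theorem shiftMap_injective : Function.Injective (shiftMap n K) :=
  Function.LeftInverse.injective (shiftMap_shiftMap hn)

theorem shiftMap_one : shiftMap n K 1 = 1 := by
  rw [shiftMap_apply, trace_one]
  field_simp
  rw [show (2 : K) • (1 : Matrix n n K) = 1 + 1 from two_smul K 1]
  abel

theorem trace_shiftMap_mul_shiftMap (X Y : Matrix n n K) :
    (shiftMap n K X * shiftMap n K Y).trace = (X * Y).trace := by
  simp only [shiftMap_apply, add_mul, mul_add, neg_mul, mul_neg, Matrix.smul_mul,
    Matrix.mul_smul, mul_one, one_mul, smul_smul, trace_add, trace_neg, trace_smul, trace_one, smul_eq_mul]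
  field_simp
  ring

end Field

theorem IsHermitian.ofReal_re_trace {n : Type*} [Fintype n] {X : Matrix n n ℂ}
    (hX : X.IsHermitian) : (X.trace.re : ℂ) = X.trace := by
  rw [← Complex.conj_eq_iff_re, ← Complex.star_def, ← trace_conjTranspose, hX.eq]

theorem IsHermitian.shiftMap {n : Type*} [Fintype n] [DecidableEq n] {X : Matrix n n ℂ}
    (hX : X.IsHermitian) : (shiftMap n ℂ X).IsHermitian := by
  rw [shiftMap_apply, ← hX.ofReal_re_trace]
  refine hX.neg.add ?_
  simp only [IsHermitian, conjTranspose_smul, conjTranspose_one, star_div₀, star_mul',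
    Complex.star_def, Complex.conj_ofReal, map_natCast, map_ofNat]

end Matrix

theorem shifted_wigner_basis {d : ℕ} [NeZero d]
    (F : Fin (d ^ 2) → Matrix (Fin d) (Fin d) ℂ) (hF : IsWignerBasis F)
    (FS : Fin (d ^ 2) → Matrix (Fin d) (Fin d) ℂ)
    (hFS : ∀ i, FS i = -F i +
      ((2 * ((F i).trace).re / (d : ℝ)) • (1 : Matrix (Fin d) (Fin d) ℂ))) :
    IsWignerBasis FS ∧ ∀ i, (FS i).trace = (F i).trace := by
  obtain ⟨⟨hHerm, hLI, hSum, hPos⟩, hOrth⟩ := hF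
  have hd : (Fintype.card (Fin d) : ℂ) ≠ 0 := by simp [NeZero.ne d]
  have hFS_eq : FS = shiftMap (Fin d) ℂ ∘ F := by
    funext i
    rw [hFS i, Function.comp_apply, shiftMap_apply, ← (hHerm i).ofReal_re_trace, Fintype.card_fin,
      ← Complex.coe_smul]
    push_cast
    rfl
  have htr : ∀ i, (FS i).trace = (F i).trace := fun i => by
    rw [hFS_eq, Function.comp_apply, trace_shiftMap hd]
  refine ⟨⟨⟨fun i => ?_, ?_, ?_, fun i => htr i ▸ hPos i⟩, fun i j hij => ?_⟩, htr⟩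
  · exact hFS_eq ▸ (hHerm i).shiftMap
  · exact hFS_eq ▸ hLI.map' ((shiftMap (Fin d) ℂ).restrictScalars ℝ)
      (LinearMap.ker_eq_bot.mpr (shiftMap_injective hd))
  · rw [hFS_eq, ← shiftMap_one hd, ← hSum, map_sum]
    rfl
  · rw [hFS_eq, Function.comp_apply, Function.comp_apply, trace_shiftMap_mul_shiftMap hd,
      hOrth i j hij]
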